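/- arXiv:1610.01257 — 4 statements merged into one kernel-verified Lean document; each statement's English description precedes it below -/
import Mathlib

section
/- Let N ≥ 1 and let C, U, V, Λ be constant N×N complex matrices. Suppose Q : ℂ → M_N(ℂ) is a matrix-valued polynomial satisfying y(1−y)Q''(y) + Q'(y)(C − yU) − Q(y)V = Λ Q(y) for all y. Then for every k ∈ ℕ the k-th derivative Q^{(k)} satisfies y(1−y)(Q^{(k)})''(y) + (Q^{(k)})'(y)((C + kI) − y(U + 2kI)) − Q^{(k)}(y)(V + kU + k(k−1)I) = Λ Q^{(k)}(y) for all y. -/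
open Matrix Polynomial

/-- Entrywise derivative of a matrix of polynomials. -/
noncomputable def matPolyDeriv {N : ℕ} (Q : Matrix (Fin N) (Fin N) (Polynomial ℂ)) :
    Matrix (Fin N) (Fin N) (Polynomial ℂ) :=
  Q.map fun p => Polynomial.derivative p

/-- Entrywise evaluation of a matrix of polynomials. -/
noncomputable def matPolyEval {N : ℕ} (Q : Matrix (Fin N) (Fin N) (Polynomial ℂ)) (y : ℂ) :
    Matrix (Fin N) (Fin N) ℂ :=
  Q.map (Polynomial.eval y)

section helpers
variable {N : ℕ} (A B : Matrix (Fin N) (Fin N) (Polynomial ℂ))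

lemma mD_add : matPolyDeriv (A + B) = matPolyDeriv A + matPolyDeriv B := by
  ext i j; simp [matPolyDeriv]

lemma mD_sub : matPolyDeriv (A - B) = matPolyDeriv A - matPolyDeriv B := by
  ext i j; simp [matPolyDeriv]

lemma mD_mul : matPolyDeriv (A * B) = matPolyDeriv A * B + A * matPolyDeriv B := by
  ext i j
  simp [matPolyDeriv, Matrix.mul_apply, ← Finset.sum_add_distrib, Polynomial.derivative_mul]

lemma mD_smul (p : Polynomial ℂ) :
    matPolyDeriv (p • A) = derivative p • A + p • matPolyDeriv A := by
  ext i j; simp [matPolyDeriv, Polynomial.derivative_mul]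

lemma mD_one : matPolyDeriv (1 : Matrix (Fin N) (Fin N) (Polynomial ℂ)) = 0 := by
  ext i j; simp [matPolyDeriv, Matrix.one_apply, apply_ite (derivative (R := ℂ))]

lemma mD_mapC (M : Matrix (Fin N) (Fin N) ℂ) :
    matPolyDeriv (M.map Polynomial.C) = 0 := by
  ext i j; simp [matPolyDeriv]

lemma mE_add (y : ℂ) : matPolyEval (A + B) y = matPolyEval A y + matPolyEval B y := by
  ext i j; simp [matPolyEval]

lemma mE_sub (y : ℂ) : matPolyEval (A - B) y = matPolyEval A y - matPolyEval B y := by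
  ext i j; simp [matPolyEval]

lemma mE_mul (y : ℂ) : matPolyEval (A * B) y = matPolyEval A y * matPolyEval B y := by
  ext i j; simp [matPolyEval, Matrix.mul_apply, Polynomial.eval_finset_sum]

lemma mE_smul (p : Polynomial ℂ) (y : ℂ) :
    matPolyEval (p • A) y = Polynomial.eval y p • matPolyEval A y := by
  ext i j; simp [matPolyEval]

lemma mE_one (y : ℂ) : matPolyEval (1 : Matrix (Fin N) (Fin N) (Polynomial ℂ)) y = 1 := by
  ext i j; simp [matPolyEval, Matrix.one_apply, apply_ite (Polynomial.eval y)]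

lemma mE_mapC (M : Matrix (Fin N) (Fin N) ℂ) (y : ℂ) :
    matPolyEval (M.map Polynomial.C) y = M := by
  ext i j; simp [matPolyEval]

lemma mE_funext (h : ∀ y, matPolyEval A y = matPolyEval B y) : A = B := by
  refine Matrix.ext fun i j => Polynomial.funext fun y => ?_
  have := congrFun (congrFun (h y) i) j
  simpa [matPolyEval] using this

end helpers

section core
variable {N : ℕ}

/-- one differentiation step at the polynomial level -/
lemma step (C U V L Q : Matrix (Fin N) (Fin N) (Polynomial ℂ))
    (hC : matPolyDeriv C = 0) (hU : matPolyDeriv U = 0)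
    (hV : matPolyDeriv V = 0) (hL : matPolyDeriv L = 0)
    (h : (X * (1 - X) : Polynomial ℂ) • matPolyDeriv (matPolyDeriv Q)
        + matPolyDeriv Q * (C - (X : Polynomial ℂ) • U) - Q * V = L * Q) :
    (X * (1 - X) : Polynomial ℂ) • matPolyDeriv (matPolyDeriv (matPolyDeriv Q))
        + matPolyDeriv (matPolyDeriv Q) * ((C + 1) - (X : Polynomial ℂ) • (U + (2 : Polynomial ℂ) • 1))
        - matPolyDeriv Q * (V + U) = L * matPolyDeriv Q := by
  have h' := congrArg matPolyDeriv h
  simp only [mD_add, mD_sub, mD_mul, mD_smul, hC, hU, hV, hL, mD_one,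
    Polynomial.derivative_mul, Polynomial.derivative_X, Polynomial.derivative_sub,
    Polynomial.derivative_one, zero_mul, zero_add, add_zero, mul_zero, smul_zero,
    zero_sub, sub_zero, one_mul, mul_one] at h'
  rw [← h']
  simp only [mul_add, mul_sub, add_mul, sub_mul, mul_one, one_mul, mul_smul_comm,
    smul_add, smul_sub, smul_smul, one_smul, mul_neg, neg_mul, smul_neg, neg_smul]
  module

end core

section main
variable {N : ℕ}

lemma main (C U V L Q : Matrix (Fin N) (Fin N) (Polynomial ℂ))
    (hC : matPolyDeriv C = 0) (hU : matPolyDeriv U = 0)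
    (hV : matPolyDeriv V = 0) (hL : matPolyDeriv L = 0)
    (h : (X * (1 - X) : Polynomial ℂ) • matPolyDeriv (matPolyDeriv Q)
        + matPolyDeriv Q * (C - (X : Polynomial ℂ) • U) - Q * V = L * Q) :
    ∀ k : ℕ,
      (X * (1 - X) : Polynomial ℂ) • matPolyDeriv (matPolyDeriv (matPolyDeriv^[k] Q))
        + matPolyDeriv (matPolyDeriv^[k] Q)
            * ((C + ((k : Polynomial ℂ)) • 1)
                - (X : Polynomial ℂ) • (U + (2 * (k : Polynomial ℂ)) • 1))
        - matPolyDeriv^[k] Q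
            * (V + (k : Polynomial ℂ) • U
                + ((k : Polynomial ℂ) * ((k : Polynomial ℂ) - 1)) • 1)
      = L * matPolyDeriv^[k] Q := by
  intro k
  induction k with
  | zero => simpa using h
  | succ k ih =>
      have hC' : matPolyDeriv (C + ((k : Polynomial ℂ)) • 1) = 0 := by
        simp [mD_add, mD_smul, hC, mD_one]
      have hU' : matPolyDeriv (U + (2 * (k : Polynomial ℂ)) • 1) = 0 := by
        simp [mD_add, mD_smul, hU, mD_one]
      have hV' : matPolyDeriv (V + (k : Polynomial ℂ) • U
          + ((k : Polynomial ℂ) * ((k : Polynomial ℂ) - 1)) • 1) = 0 := by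
        simp [mD_add, mD_smul, hV, hU, mD_one]
      have h2 := step _ _ _ _ _ hC' hU' hV' hL ih
      have e1 : (C + ((k : Polynomial ℂ)) • 1) + 1
          = C + (((k + 1 : ℕ) : Polynomial ℂ)) • (1 : Matrix (Fin N) (Fin N) (Polynomial ℂ)) := by
        push_cast
        module
      have e2 : (U + (2 * (k : Polynomial ℂ)) • 1) + (2 : Polynomial ℂ) • 1
          = U + (2 * ((k + 1 : ℕ) : Polynomial ℂ)) • (1 : Matrix (Fin N) (Fin N) (Polynomial ℂ)) := by
        push_cast
        module
      have e3 : (V + (k : Polynomial ℂ) • U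
            + ((k : Polynomial ℂ) * ((k : Polynomial ℂ) - 1)) • 1)
            + (U + (2 * (k : Polynomial ℂ)) • 1)
          = V + ((k + 1 : ℕ) : Polynomial ℂ) • U
            + (((k + 1 : ℕ) : Polynomial ℂ) * (((k + 1 : ℕ) : Polynomial ℂ) - 1)) •
              (1 : Matrix (Fin N) (Fin N) (Polynomial ℂ)) := by
        push_cast
        module
      rw [e1, e2, e3] at h2
      rw [Function.iterate_succ_apply']
      exact h2

end main

/-- if a matrix-valued polynomial `Q` satisfies
`y(1−y)Q'' + Q'(C − yU) − QV = Λ Q`, then for every `k` the `k`-th derivative satisfies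
`y(1−y)(Q⁽ᵏ⁾)'' + (Q⁽ᵏ⁾)'((C+kI) − y(U+2kI)) − Q⁽ᵏ⁾(V + kU + k(k−1)I) = Λ Q⁽ᵏ⁾`. -/
theorem stmt0 {N : ℕ} (hN : 1 ≤ N) (C U V Lam : Matrix (Fin N) (Fin N) ℂ)
    (Q : Matrix (Fin N) (Fin N) (Polynomial ℂ))
    (hQ : ∀ y : ℂ,
      (y * (1 - y)) • matPolyEval (matPolyDeriv (matPolyDeriv Q)) y
        + matPolyEval (matPolyDeriv Q) y * (C - y • U)
        - matPolyEval Q y * V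
      = Lam * matPolyEval Q y) :
    ∀ (k : ℕ) (y : ℂ),
      (y * (1 - y)) • matPolyEval (matPolyDeriv (matPolyDeriv (matPolyDeriv^[k] Q))) y
        + matPolyEval (matPolyDeriv (matPolyDeriv^[k] Q)) y
            * ((C + (k : ℂ) • (1 : Matrix (Fin N) (Fin N) ℂ))
                - y • (U + (2 * (k : ℂ)) • (1 : Matrix (Fin N) (Fin N) ℂ)))
        - matPolyEval (matPolyDeriv^[k] Q) y
            * (V + (k : ℂ) • U + ((k : ℂ) * ((k : ℂ) - 1)) • (1 : Matrix (Fin N) (Fin N) ℂ))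
      = Lam * matPolyEval (matPolyDeriv^[k] Q) y := by
  intro k y
  have base : (X * (1 - X) : Polynomial ℂ) • matPolyDeriv (matPolyDeriv Q)
      + matPolyDeriv Q * (C.map Polynomial.C - (X : Polynomial ℂ) • U.map Polynomial.C) - Q * V.map Polynomial.C = Lam.map Polynomial.C * Q := by
    apply mE_funext
    intro z
    simp only [mE_add, mE_sub, mE_mul, mE_smul, mE_mapC, eval_mul, eval_sub, eval_one, eval_X]
    exact hQ z
  have key := main (C.map Polynomial.C) (U.map Polynomial.C) (V.map Polynomial.C) (Lam.map Polynomial.C) Q (mD_mapC C) (mD_mapC U) (mD_mapC V) (mD_mapC Lam) base k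
  have := congrArg (fun M => matPolyEval M y) key
  simpa only [mE_add, mE_sub, mE_mul, mE_smul, mE_mapC, mE_one, eval_mul, eval_sub,
    eval_one, eval_X, eval_natCast, eval_ofNat] using this
end

section
/- Let N ≥ 1 and let C, U, V be constant N×N complex matrices. For κ ∈ ℝ define the differential operator D^{(κ)} acting on the right of smooth matrix-valued functions Q : ℝ → M_N(ℂ) by (Q D^{(κ)})(y) := y(1−y)Q''(y) + Q'(y)((C + κI) − y(U + 2κI)) − Q(y)(V + κU + κ(κ−1)I). Then for every κ ∈ ℝ and every smooth Q : ℝ → M_N(ℂ) one has ∂_y(Q D^{(κ)}) = (∂_y Q) D^{(κ+1)}, i.e. ∂_y ∘ D^{(κ)} = D^{(κ+1)} ∘ ∂_y. -/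
open Matrix

/-- Entrywise derivative of a matrix-valued function on `ℝ`. -/
noncomputable def mderiv {N : ℕ} (Q : ℝ → Matrix (Fin N) (Fin N) ℂ) :
    ℝ → Matrix (Fin N) (Fin N) ℂ :=
  fun y => Matrix.of fun i j => deriv (fun t => Q t i j) y

/-- The differential operator `D^{(κ)}`, acting on the right of matrix-valued functions:
`(Q D^{(κ)})(y) = y(1−y)Q''(y) + Q'(y)((C+κI) − y(U+2κI)) − Q(y)(V + κU + κ(κ−1)I)`. -/
noncomputable def Dop {N : ℕ} (C U V : Matrix (Fin N) (Fin N) ℂ) (κ : ℝ)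
    (Q : ℝ → Matrix (Fin N) (Fin N) ℂ) : ℝ → Matrix (Fin N) (Fin N) ℂ :=
  fun y =>
    ((y : ℂ) * (1 - (y : ℂ))) • mderiv (mderiv Q) y
      + mderiv Q y * ((C + (κ : ℂ) • (1 : Matrix (Fin N) (Fin N) ℂ))
          - (y : ℂ) • (U + (2 * (κ : ℂ)) • (1 : Matrix (Fin N) (Fin N) ℂ)))
      - Q y * (V + (κ : ℂ) • U + ((κ : ℂ) * ((κ : ℂ) - 1)) • (1 : Matrix (Fin N) (Fin N) ℂ))

/-! Differentiate `Q D^{(κ)}` by the product rule. The derivative `1 - 2y` of the coefficient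
`y(1-y)` yields `Q''·(I - 2y I)`, which shifts `C + κI` and `U + 2κI` to their values at `κ + 1`;
differentiating `Q'·(C + κI - y(U + 2κI))` yields the extra `-Q'·(U + 2κI)`, and together with
`-Q'·(V + κU + κ(κ-1)I)` it gives `-Q'·(V + (κ+1)U + (κ+1)κ I)`. -/

variable {N : ℕ}

def HasEntrywiseDerivAt (Q : ℝ → Matrix (Fin N) (Fin N) ℂ) (Q' : Matrix (Fin N) (Fin N) ℂ)
    (y : ℝ) : Prop :=
  ∀ i j, HasDerivAt (fun t => Q t i j) (Q' i j) y

namespace HasEntrywiseDerivAt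

variable {Q R : ℝ → Matrix (Fin N) (Fin N) ℂ} {Q' R' : Matrix (Fin N) (Fin N) ℂ} {y : ℝ}

theorem mderiv (h : HasEntrywiseDerivAt Q Q' y) : mderiv Q y = Q' := by
  ext i j
  exact (h i j).deriv

theorem const (A : Matrix (Fin N) (Fin N) ℂ) (y : ℝ) :
    HasEntrywiseDerivAt (fun _ => A) 0 y :=
  fun i j => hasDerivAt_const y (A i j)

theorem add (hQ : HasEntrywiseDerivAt Q Q' y) (hR : HasEntrywiseDerivAt R R' y) :
    HasEntrywiseDerivAt (fun t => Q t + R t) (Q' + R') y :=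
  fun i j => (hQ i j).add (hR i j)

theorem sub (hQ : HasEntrywiseDerivAt Q Q' y) (hR : HasEntrywiseDerivAt R R' y) :
    HasEntrywiseDerivAt (fun t => Q t - R t) (Q' - R') y :=
  fun i j => (hQ i j).sub (hR i j)

theorem smul {f : ℝ → ℂ} {f' : ℂ} (hf : HasDerivAt f f' y) (hQ : HasEntrywiseDerivAt Q Q' y) :
    HasEntrywiseDerivAt (fun t => f t • Q t) (f' • Q y + f y • Q') y := fun i j => by
  simp only [Matrix.smul_apply, Matrix.add_apply, smul_eq_mul]
  exact hf.fun_mul (hQ i j)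

theorem mul (hQ : HasEntrywiseDerivAt Q Q' y) (hR : HasEntrywiseDerivAt R R' y) :
    HasEntrywiseDerivAt (fun t => Q t * R t) (Q' * R y + Q y * R') y := fun i j => by
  simp only [mul_apply, Matrix.add_apply, ← Finset.sum_add_distrib]
  exact HasDerivAt.fun_sum fun k _ => (hQ i k).fun_mul (hR k j)

end HasEntrywiseDerivAt

theorem hasEntrywiseDerivAt_mderiv {Q : ℝ → Matrix (Fin N) (Fin N) ℂ} {n : WithTop ℕ∞}
    (hQ : ∀ i j, ContDiff ℝ n fun t => Q t i j) (hn : n ≠ 0) (y : ℝ) :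
    HasEntrywiseDerivAt Q (mderiv Q y) y :=
  fun i j => ((hQ i j).differentiable hn y).hasDerivAt

theorem contDiff_mderiv {Q : ℝ → Matrix (Fin N) (Fin N) ℂ}
    (hQ : ∀ i j, ContDiff ℝ (⊤ : ℕ∞) fun t => Q t i j) (i j : Fin N) :
    ContDiff ℝ (⊤ : ℕ∞) fun t => mderiv Q t i j :=
  (contDiff_infty_iff_deriv.mp (hQ i j)).2

theorem hasEntrywiseDerivAt_Dop (C U V : Matrix (Fin N) (Fin N) ℂ) (κ : ℝ)
    {Q : ℝ → Matrix (Fin N) (Fin N) ℂ} {y : ℝ}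
    (h₀ : HasEntrywiseDerivAt Q (mderiv Q y) y)
    (h₁ : HasEntrywiseDerivAt (mderiv Q) (mderiv (mderiv Q) y) y)
    (h₂ : HasEntrywiseDerivAt (mderiv (mderiv Q)) (mderiv (mderiv (mderiv Q)) y) y) :
    HasEntrywiseDerivAt (Dop C U V κ Q)
      ((1 - 2 * (y : ℂ)) • mderiv (mderiv Q) y
        + ((y : ℂ) * (1 - (y : ℂ))) • mderiv (mderiv (mderiv Q)) y
        + mderiv (mderiv Q) y * ((C + (κ : ℂ) • 1) - (y : ℂ) • (U + (2 * (κ : ℂ)) • 1))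
        - mderiv Q y * (U + (2 * (κ : ℂ)) • 1)
        - mderiv Q y * (V + (κ : ℂ) • U + ((κ : ℂ) * ((κ : ℂ) - 1)) • 1)) y := by
  have hy : HasDerivAt (fun t : ℝ => (t : ℂ)) 1 y := (hasDerivAt_id y).ofReal_comp
  have hcoeff := hy.fun_mul ((hasDerivAt_const y (1 : ℂ)).fun_sub hy)
  convert (HasEntrywiseDerivAt.smul hcoeff h₂).add
    (h₁.mul ((HasEntrywiseDerivAt.const (C + (κ : ℂ) • 1) y).sub
      (HasEntrywiseDerivAt.smul hy (HasEntrywiseDerivAt.const (U + (2 * (κ : ℂ)) • 1) y))))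
    |>.sub (h₀.mul (HasEntrywiseDerivAt.const (V + (κ : ℂ) • U + ((κ : ℂ) * ((κ : ℂ) - 1)) • 1) y))
    using 1
  · rfl
  rw [show (1 : ℂ) * (1 - y) + y * (0 - 1) = 1 - 2 * y by ring]
  simp only [one_smul, smul_zero, add_zero, zero_sub, mul_neg, mul_zero]
  abel

theorem stmt1_general {N : ℕ} (C U V : Matrix (Fin N) (Fin N) ℂ) (κ : ℝ)
    (Q : ℝ → Matrix (Fin N) (Fin N) ℂ)
    (hQ : ∀ i j, ContDiff ℝ (⊤ : ℕ∞) fun t => Q t i j) :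
    mderiv (Dop C U V κ Q) = Dop C U V (κ + 1) (mderiv Q) := by
  have hQ' := contDiff_mderiv hQ
  have hQ'' := contDiff_mderiv hQ'
  funext y
  rw [(hasEntrywiseDerivAt_Dop C U V κ
    (hasEntrywiseDerivAt_mderiv hQ (by simp) y) (hasEntrywiseDerivAt_mderiv hQ' (by simp) y)
    (hasEntrywiseDerivAt_mderiv hQ'' (by simp) y)).mderiv]
  simp only [Dop]
  push_cast
  simp only [mul_sub, mul_add, Matrix.mul_smul, Matrix.mul_one]
  module

/-- `∂_y ∘ D^{(κ)} = D^{(κ+1)} ∘ ∂_y` on smooth matrix-valued functions. -/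
theorem stmt1 {N : ℕ} (hN : 1 ≤ N) (C U V : Matrix (Fin N) (Fin N) ℂ) (κ : ℝ)
    (Q : ℝ → Matrix (Fin N) (Fin N) ℂ)
    (hQ : ∀ i j, ContDiff ℝ (⊤ : ℕ∞) fun t => Q t i j) :
    mderiv (Dop C U V κ Q) = Dop C U V (κ + 1) (mderiv Q) :=
  stmt1_general C U V κ Q hQ
end

section
/- Let N ≥ 1, let S, R be constant N×N complex matrices, and let Ψ₀ : (0,1) → GL_N(ℂ) be a smooth matrix-valued function satisfying y(1−y)Ψ₀'(y) = (S + yR)Ψ₀(y) for all y ∈ (0,1). Let a^{(κ)} : (0,1) → ℂ and F^{(κ)} : (0,1) → M_N(ℂ) be smooth, define the operator Ω^{(κ)} acting on the right of smooth matrix-valued functions Q on (0,1) by Q Ω^{(κ)} := y(1−y)Q'' + a^{(κ)}(y)Q' + Q F^{(κ)}(y), and define D^{(κ)} := Ψ₀ Ω^{(κ)} Ψ₀^{−1}, i.e. (P D^{(κ)})(y) := (((PΨ₀) Ω^{(κ)})(y)) Ψ₀(y)^{−1}. Then there exist constant N×N matrices C^{(κ)}, U^{(κ)}, V^{(κ)}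 such that (P D^{(κ)})(y) = y(1−y)P''(y) + P'(y)(C^{(κ)} − yU^{(κ)}) − P(y)V^{(κ)} for all smooth matrix-valued P on (0,1) if and only if a^{(κ)}(y)I = (C^{(κ)} − yU^{(κ)}) − 2(S + yR) and F^{(κ)}(y) = −Ψ₀(y)^{−1}V^{(κ)}Ψ₀(y) − y(1−y)Ψ₀(y)^{−1}Ψ₀''(y) − a^{(κ)}(y)Ψ₀(y)^{−1}Ψ₀'(y) for all y ∈ (0,1). -/
open Matrix Set

/-- The operator `Ω^{(κ)}` acting on the right:
`Q Ω^{(κ)} = y(1−y)Q'' + a^{(κ)}(y)Q' + Q F^{(κ)}(y)`. -/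
noncomputable def OmegaOp {N : ℕ} (a : ℝ → ℂ) (F : ℝ → Matrix (Fin N) (Fin N) ℂ)
    (Q : ℝ → Matrix (Fin N) (Fin N) ℂ) : ℝ → Matrix (Fin N) (Fin N) ℂ :=
  fun y =>
    ((y : ℂ) * (1 - (y : ℂ))) • mderiv (mderiv Q) y + a y • mderiv Q y + Q y * F y

/-- The conjugated operator `D^{(κ)} = Ψ₀ Ω^{(κ)} Ψ₀⁻¹`:
`(P D^{(κ)})(y) = (((PΨ₀) Ω^{(κ)})(y)) Ψ₀(y)⁻¹`. -/
noncomputable def DconjOp {N : ℕ} (Ψ : ℝ → Matrix (Fin N) (Fin N) ℂ)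
    (a : ℝ → ℂ) (F : ℝ → Matrix (Fin N) (Fin N) ℂ)
    (P : ℝ → Matrix (Fin N) (Fin N) ℂ) : ℝ → Matrix (Fin N) (Fin N) ℂ :=
  fun y => OmegaOp a F (fun t => P t * Ψ t) y * (Ψ y)⁻¹

/-!
Writing `Q = PΨ₀`, the Leibniz rule and the ODE `y(1−y)Ψ₀' = (S + yR)Ψ₀` give
`P D = y(1−y)P'' + P'(2(S + yR) + a) + P (y(1−y)Ψ₀''Ψ₀⁻¹ + aΨ₀'Ψ₀⁻¹ + Ψ₀FΨ₀⁻¹)`.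
An operator of this shape is determined by its values on `P = I` and `P = yI`, which read off
the zeroth- and first-order coefficients; comparing them with `C − yU` and `−V` gives both
conditions.
-/

section MatrixDerivative

variable {N : ℕ}

def EntrywiseContDiffOn (Q : ℝ → Matrix (Fin N) (Fin N) ℂ) (s : Set ℝ) : Prop :=
  ∀ i j, ContDiffOn ℝ (⊤ : ℕ∞) (fun t => Q t i j) s

variable {s : Set ℝ} {A B : ℝ → Matrix (Fin N) (Fin N) ℂ} {y : ℝ}

theorem EntrywiseContDiffOn.differentiableAt (hA : EntrywiseContDiffOn A s) (hs : IsOpen s)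
    (hy : y ∈ s) (i j : Fin N) : DifferentiableAt ℝ (fun t => A t i j) y :=
  ((hA i j).contDiffAt (hs.mem_nhds hy)).differentiableAt (by simp)

theorem EntrywiseContDiffOn.mderiv (hA : EntrywiseContDiffOn A s) (hs : IsOpen s) :
    EntrywiseContDiffOn (mderiv A) s :=
  fun i j => (hA i j).deriv_of_isOpen hs (by simp)

theorem EntrywiseContDiffOn.mul (hA : EntrywiseContDiffOn A s)
    (hB : EntrywiseContDiffOn B s) : EntrywiseContDiffOn (fun t => A t * B t) s := by
  intro i j
  simp only [Matrix.mul_apply]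
  exact ContDiffOn.sum fun k _ => (hA i k).mul (hB k j)

theorem entrywiseContDiffOn_const (M : Matrix (Fin N) (Fin N) ℂ) :
    EntrywiseContDiffOn (fun _ => M) s :=
  fun _ _ => contDiffOn_const

theorem entrywiseContDiffOn_ofReal_smul (M : Matrix (Fin N) (Fin N) ℂ) :
    EntrywiseContDiffOn (fun t : ℝ => (t : ℂ) • M) s :=
  fun _ _ => Complex.ofRealCLM.contDiff.contDiffOn.mul contDiffOn_const

theorem mderiv_congr_of_eqOn (hs : IsOpen s) (h : EqOn A B s) (hy : y ∈ s) :
    mderiv A y = mderiv B y := by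
  ext i j
  exact Filter.EventuallyEq.deriv_eq <|
    Filter.eventuallyEq_of_mem (hs.mem_nhds hy) fun t ht => by simp only [h ht]

theorem mderiv_add (hA : ∀ i j, DifferentiableAt ℝ (fun t => A t i j) y)
    (hB : ∀ i j, DifferentiableAt ℝ (fun t => B t i j) y) :
    mderiv (fun t => A t + B t) y = mderiv A y + mderiv B y := by
  ext i j
  exact deriv_add (hA i j) (hB i j)

theorem mderiv_mul (hA : ∀ i j, DifferentiableAt ℝ (fun t => A t i j) y)
    (hB : ∀ i j, DifferentiableAt ℝ (fun t => B t i j) y) :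
    mderiv (fun t => A t * B t) y = mderiv A y * B y + A y * mderiv B y := by
  ext i j
  simp only [mderiv, Matrix.of_apply, Matrix.add_apply, Matrix.mul_apply]
  rw [deriv_fun_sum fun k _ => (hA i k).fun_mul (hB k j), ← Finset.sum_add_distrib]
  exact Finset.sum_congr rfl fun k _ => deriv_fun_mul (hA i k) (hB k j)

theorem mderiv_mderiv_mul (hA : EntrywiseContDiffOn A s) (hB : EntrywiseContDiffOn B s)
    (hs : IsOpen s) (hy : y ∈ s) :
    mderiv (mderiv fun t => A t * B t) y =
      mderiv (mderiv A) y * B y + (2 : ℂ) • (mderiv A y * mderiv B y)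
        + A y * mderiv (mderiv B) y := by
  have hA' := hA.mderiv hs
  have hB' := hB.mderiv hs
  rw [mderiv_congr_of_eqOn hs (fun t ht => mderiv_mul (hA.differentiableAt hs ht)
      (hB.differentiableAt hs ht)) hy,
    mderiv_add ((hA'.mul hB).differentiableAt hs hy) ((hA.mul hB').differentiableAt hs hy),
    mderiv_mul (hA'.differentiableAt hs hy) (hB.differentiableAt hs hy),
    mderiv_mul (hA.differentiableAt hs hy) (hB'.differentiableAt hs hy), two_smul]
  abel

theorem mderiv_const (M : Matrix (Fin N) (Fin N) ℂ) :
    mderiv (fun _ : ℝ => M) = fun _ => 0 := by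
  ext y i j
  simp [mderiv]

theorem mderiv_ofReal_smul (M : Matrix (Fin N) (Fin N) ℂ) :
    mderiv (fun t : ℝ => (t : ℂ) • M) = fun _ => M := by
  ext y i j
  simp only [mderiv, Matrix.of_apply, Matrix.smul_apply, smul_eq_mul]
  simpa using ((hasDerivAt_id y).ofReal_comp.mul_const (M i j)).deriv

end MatrixDerivative

theorem Matrix.eq_nonsing_inv_mul_mul_iff {n α : Type*} [Fintype n] [DecidableEq n]
    [CommRing α] {M F X : Matrix n n α} (h : IsUnit M.det) :
    F = M⁻¹ * X * M ↔ M * F * M⁻¹ = X := by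
  constructor <;> rintro rfl <;> simp [Matrix.mul_assoc, h]

section Conjugation

variable {N : ℕ} {S R : Matrix (Fin N) (Fin N) ℂ} {Ψ : ℝ → Matrix (Fin N) (Fin N) ℂ}
  {a : ℝ → ℂ} {F : ℝ → Matrix (Fin N) (Fin N) ℂ} {s : Set ℝ} {y : ℝ}

noncomputable def conjPotential (Ψ : ℝ → Matrix (Fin N) (Fin N) ℂ) (a : ℝ → ℂ)
    (F : ℝ → Matrix (Fin N) (Fin N) ℂ) (y : ℝ) : Matrix (Fin N) (Fin N) ℂ :=
  ((y : ℂ) * (1 - (y : ℂ))) • (mderiv (mderiv Ψ) y * (Ψ y)⁻¹)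
    + a y • (mderiv Ψ y * (Ψ y)⁻¹) + Ψ y * F y * (Ψ y)⁻¹

theorem DconjOp_eq (hs : IsOpen s) (hΨ : EntrywiseContDiffOn Ψ s) (hy : y ∈ s)
    (hinv : IsUnit (Ψ y).det)
    (hode : ((y : ℂ) * (1 - (y : ℂ))) • mderiv Ψ y = (S + (y : ℂ) • R) * Ψ y)
    {P : ℝ → Matrix (Fin N) (Fin N) ℂ} (hP : EntrywiseContDiffOn P s) :
    DconjOp Ψ a F P y =
      ((y : ℂ) * (1 - (y : ℂ))) • mderiv (mderiv P) y
        + mderiv P y * ((2 : ℂ) • (S + (y : ℂ) • R) + a y • 1)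
        + P y * conjPotential Ψ a F y := by
  have hSR : S + (y : ℂ) • R = ((y : ℂ) * (1 - (y : ℂ))) • (mderiv Ψ y * (Ψ y)⁻¹) := by
    rw [← Matrix.smul_mul, hode, mul_nonsing_inv_cancel_right (Ψ y) _ hinv]
  rw [hSR, DconjOp, OmegaOp, mderiv_mul (hP.differentiableAt hs hy)
    (hΨ.differentiableAt hs hy), mderiv_mderiv_mul hP hΨ hs hy, conjPotential]
  simp only [Matrix.add_mul, Matrix.smul_mul, Matrix.mul_smul, Matrix.mul_add, smul_add,
    smul_smul, Matrix.mul_assoc, mul_nonsing_inv _ hinv, Matrix.mul_one]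
  rw [mul_comm _ (2 : ℂ)]
  abel

theorem DconjOp_one (hs : IsOpen s) (hΨ : EntrywiseContDiffOn Ψ s) (hy : y ∈ s)
    (hinv : IsUnit (Ψ y).det)
    (hode : ((y : ℂ) * (1 - (y : ℂ))) • mderiv Ψ y = (S + (y : ℂ) • R) * Ψ y) :
    DconjOp Ψ a F (fun _ => 1) y = conjPotential Ψ a F y := by
  rw [DconjOp_eq hs hΨ hy hinv hode (entrywiseContDiffOn_const 1), mderiv_const, mderiv_const]
  simp

theorem DconjOp_ofReal_smul_one (hs : IsOpen s) (hΨ : EntrywiseContDiffOn Ψ s) (hy : y ∈ s)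
    (hinv : IsUnit (Ψ y).det)
    (hode : ((y : ℂ) * (1 - (y : ℂ))) • mderiv Ψ y = (S + (y : ℂ) • R) * Ψ y) :
    DconjOp Ψ a F (fun t => (t : ℂ) • 1) y =
      (2 : ℂ) • (S + (y : ℂ) • R) + a y • 1 + (y : ℂ) • conjPotential Ψ a F y := by
  rw [DconjOp_eq hs hΨ hy hinv hode (entrywiseContDiffOn_ofReal_smul 1), mderiv_ofReal_smul,
    mderiv_const]
  simp

theorem eq_iff_conjPotential_eq_neg (hinv : IsUnit (Ψ y).det) (V : Matrix (Fin N) (Fin N) ℂ) :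
    F y = -((Ψ y)⁻¹ * V * Ψ y)
        - ((y : ℂ) * (1 - (y : ℂ))) • ((Ψ y)⁻¹ * mderiv (mderiv Ψ) y)
        - a y • ((Ψ y)⁻¹ * mderiv Ψ y)
      ↔ conjPotential Ψ a F y = -V := by
  have hconj : -((Ψ y)⁻¹ * V * Ψ y)
        - ((y : ℂ) * (1 - (y : ℂ))) • ((Ψ y)⁻¹ * mderiv (mderiv Ψ) y)
        - a y • ((Ψ y)⁻¹ * mderiv Ψ y)
      = (Ψ y)⁻¹ * (-V - ((y : ℂ) * (1 - (y : ℂ))) • (mderiv (mderiv Ψ) y * (Ψ y)⁻¹)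
        - a y • (mderiv Ψ y * (Ψ y)⁻¹)) * Ψ y := by
    simp only [Matrix.mul_sub, Matrix.sub_mul, Matrix.mul_neg, Matrix.neg_mul,
      Matrix.mul_smul, Matrix.smul_mul, Matrix.mul_assoc, nonsing_inv_mul _ hinv,
      Matrix.mul_one]
  rw [hconj, Matrix.eq_nonsing_inv_mul_mul_iff hinv, conjPotential]
  constructor <;> intro h
  · rw [h]; abel
  · rw [← h]; abel

end Conjugation

theorem stmt2_general {N : ℕ} (S R : Matrix (Fin N) (Fin N) ℂ)
    (Ψ : ℝ → Matrix (Fin N) (Fin N) ℂ)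
    (hΨsmooth : ∀ i j, ContDiffOn ℝ (⊤ : ℕ∞) (fun t => Ψ t i j) (Set.Ioo 0 1))
    (hΨinv : ∀ y ∈ Set.Ioo (0:ℝ) 1, IsUnit (Ψ y))
    (hΨode : ∀ y ∈ Set.Ioo (0:ℝ) 1,
      ((y : ℂ) * (1 - (y : ℂ))) • mderiv Ψ y = (S + (y : ℂ) • R) * Ψ y)
    (a : ℝ → ℂ) (F : ℝ → Matrix (Fin N) (Fin N) ℂ) :
    (∃ C U V : Matrix (Fin N) (Fin N) ℂ,
      ∀ P : ℝ → Matrix (Fin N) (Fin N) ℂ,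
        (∀ i j, ContDiffOn ℝ (⊤ : ℕ∞) (fun t => P t i j) (Set.Ioo 0 1)) →
        ∀ y ∈ Set.Ioo (0:ℝ) 1,
          DconjOp Ψ a F P y =
            ((y : ℂ) * (1 - (y : ℂ))) • mderiv (mderiv P) y
              + mderiv P y * (C - (y : ℂ) • U) - P y * V)
    ↔
    (∃ C U V : Matrix (Fin N) (Fin N) ℂ,
      ∀ y ∈ Set.Ioo (0:ℝ) 1,
        a y • (1 : Matrix (Fin N) (Fin N) ℂ)
            = (C - (y : ℂ) • U) - (2 : ℂ) • (S + (y : ℂ) • R)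
        ∧ F y = -((Ψ y)⁻¹ * V * Ψ y)
            - ((y : ℂ) * (1 - (y : ℂ))) • ((Ψ y)⁻¹ * mderiv (mderiv Ψ) y)
            - a y • ((Ψ y)⁻¹ * mderiv Ψ y)) := by
  have hinv : ∀ y ∈ Ioo (0 : ℝ) 1, IsUnit (Ψ y).det :=
    fun y hy => (Matrix.isUnit_iff_isUnit_det _).1 (hΨinv y hy)
  constructor
  · rintro ⟨C, U, V, hD⟩
    refine ⟨C, U, V, fun y hy => ?_⟩
    have hpot : conjPotential Ψ a F y = -V := by
      simpa [DconjOp_one isOpen_Ioo hΨsmooth hy (hinv y hy) (hΨode y hy), mderiv_const]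
        using hD _ (entrywiseContDiffOn_const 1) y hy
    have hlin := hD _ (entrywiseContDiffOn_ofReal_smul 1) y hy
    rw [DconjOp_ofReal_smul_one isOpen_Ioo hΨsmooth hy (hinv y hy) (hΨode y hy), hpot,
      mderiv_ofReal_smul, mderiv_const] at hlin
    simp only [smul_zero, zero_add, Matrix.one_mul, Matrix.smul_mul, smul_neg,
      ← sub_eq_add_neg, sub_left_inj] at hlin
    refine ⟨?_, (eq_iff_conjPotential_eq_neg (hinv y hy) V).2 hpot⟩
    rw [← hlin]
    abel
  · rintro ⟨C, U, V, hcoeff⟩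
    refine ⟨C, U, V, fun P hP y hy => ?_⟩
    obtain ⟨ha, hF⟩ := hcoeff y hy
    rw [DconjOp_eq isOpen_Ioo hΨsmooth hy (hinv y hy) (hΨode y hy) hP,
      (eq_iff_conjPotential_eq_neg (hinv y hy) V).1 hF, ha, add_sub_cancel, mul_neg,
      ← sub_eq_add_neg]

/-- `D^{(κ)} = Ψ₀ Ω^{(κ)} Ψ₀⁻¹` is a matrix-valued hypergeometric operator
`y(1−y)∂² + ∂(C − yU) − V` for some constant matrices `C, U, V` if and only if
`a^{(κ)}(y)I = (C − yU) − 2(S + yR)` and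
`F^{(κ)}(y) = −Ψ₀⁻¹VΨ₀ − y(1−y)Ψ₀⁻¹Ψ₀'' − a^{(κ)}(y)Ψ₀⁻¹Ψ₀'` for those matrices. -/
theorem stmt2 {N : ℕ} (hN : 1 ≤ N) (S R : Matrix (Fin N) (Fin N) ℂ)
    (Ψ : ℝ → Matrix (Fin N) (Fin N) ℂ)
    (hΨsmooth : ∀ i j, ContDiffOn ℝ (⊤ : ℕ∞) (fun t => Ψ t i j) (Set.Ioo 0 1))
    (hΨinv : ∀ y ∈ Set.Ioo (0:ℝ) 1, IsUnit (Ψ y))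
    (hΨode : ∀ y ∈ Set.Ioo (0:ℝ) 1,
      ((y : ℂ) * (1 - (y : ℂ))) • mderiv Ψ y = (S + (y : ℂ) • R) * Ψ y)
    (a : ℝ → ℂ) (F : ℝ → Matrix (Fin N) (Fin N) ℂ)
    (ha : ContDiffOn ℝ (⊤ : ℕ∞) a (Set.Ioo 0 1))
    (hF : ∀ i j, ContDiffOn ℝ (⊤ : ℕ∞) (fun t => F t i j) (Set.Ioo 0 1)) :
    (∃ C U V : Matrix (Fin N) (Fin N) ℂ,
      ∀ P : ℝ → Matrix (Fin N) (Fin N) ℂ,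
        (∀ i j, ContDiffOn ℝ (⊤ : ℕ∞) (fun t => P t i j) (Set.Ioo 0 1)) →
        ∀ y ∈ Set.Ioo (0:ℝ) 1,
          DconjOp Ψ a F P y =
            ((y : ℂ) * (1 - (y : ℂ))) • mderiv (mderiv P) y
              + mderiv P y * (C - (y : ℂ) • U) - P y * V)
    ↔
    (∃ C U V : Matrix (Fin N) (Fin N) ℂ,
      ∀ y ∈ Set.Ioo (0:ℝ) 1,
        a y • (1 : Matrix (Fin N) (Fin N) ℂ)
            = (C - (y : ℂ) • U) - (2 : ℂ) • (S + (y : ℂ) • R)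
        ∧ F y = -((Ψ y)⁻¹ * V * Ψ y)
            - ((y : ℂ) * (1 - (y : ℂ))) • ((Ψ y)⁻¹ * mderiv (mderiv Ψ) y)
            - a y • ((Ψ y)⁻¹ * mderiv Ψ y)) :=
  stmt2_general S R Ψ hΨsmooth hΨinv hΨode a F
end

section
/- Let N ∈ ℕ, set ℓ := N/2, and let ν > 0. Let S be the (N+1)×(N+1) matrix (indices 0,…,N) with S_{i,i−1} = i/2 for 1 ≤ i ≤ N, S_{i,i+1} = (N−i)/2 for 0 ≤ i ≤ N−1, and all other entries zero. For y ∈ (0,1) let F(y) be the tridiagonal matrix with F(y)_{i,i} = ℓ(ℓ+2) − i² + 2ℓi − (ℓ(2i+1) − i²)/(2y(1−y)), F(y)_{i,i−1} = i(2ℓ−i+1)(1−2y)/(4y(1−y)), F(y)_{i,i+1} = (i+1)(2ℓ−i)(1−2y)/(4y(1−y)), and set F^{(ν)}(y) := F(y) − (ν−1)(2ℓ+ν+1)I + ((ν−1)(1−2y)/(2y(1−y)))(Sᵀ − ℓI + 2ℓyI). Let T^{(ν)} be the diagonal matrix with T^{(ν)}_{i,i} = C(N,i)(ν)_i/(ν+N−i)_i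 for i = 0,…,N. Then T^{(ν)} (F^{(ν)}(y))ᵀ = F^{(ν)}(y) T^{(ν)} for all y ∈ (0,1). -/
open Matrix Polynomial

/-!
Since `T` is diagonal and `F^{(ν)}(y)` is tridiagonal, the identity reduces to the neighbour
conditions `t_i F^{(ν)}_{i+1,i} = F^{(ν)}_{i,i+1} t_{i+1}`. With `k = (1-2y)/(4y(1-y))` the
off-diagonal entries are `F^{(ν)}_{i+1,i} = k (N-i)(ν+i)` and `F^{(ν)}_{i,i+1} = k (i+1)(ν+N-i-1)`,
so the conditions amount to the first-order recurrence
`t_i (N-i)(ν+i) = (i+1)(ν+N-i-1) t_{i+1}`, which the weights `C(N,i)(ν)_i/(ν+N-i)_i` satisfy by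
Pascal-type identities for binomials and Pochhammer symbols.
-/

theorem ascPochhammer_succ_eval_left {S : Type*} [CommSemiring S] (n : ℕ) (x : S) :
    (ascPochhammer S (n + 1)).eval x = x * (ascPochhammer S n).eval (x + 1) := by
  rw [ascPochhammer_succ_left, eval_mul, eval_X, eval_comp, eval_add, eval_X, eval_one]

theorem Matrix.diagonal_mul_transpose_eq_mul_diagonal_of_tridiagonal {R : Type*} [CommSemiring R]
    {n : ℕ} (d : Fin (n + 1) → R) (A : Matrix (Fin (n + 1)) (Fin (n + 1)) R)
    (hA : ∀ i j : Fin (n + 1), i ≠ j → (i : ℕ) + 1 ≠ j → (j : ℕ) + 1 ≠ i → A i j = 0)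
    (h : ∀ i j : Fin (n + 1), (i : ℕ) + 1 = j → d i * A j i = A i j * d j) :
    diagonal d * Aᵀ = A * diagonal d := by
  ext i j
  rw [diagonal_mul, mul_diagonal, transpose_apply]
  rcases eq_or_ne i j with rfl | hij
  · exact mul_comm _ _
  by_cases hup : (i : ℕ) + 1 = j
  · exact h i j hup
  by_cases hdown : (j : ℕ) + 1 = i
  · rw [mul_comm (d i), mul_comm (A i j)]
    exact (h j i hdown).symm
  rw [hA i j hij hup hdown, hA j i hij.symm hdown hup, mul_zero, zero_mul]

noncomputable def symmetrizingWeight (N : ℕ) (ν : ℝ) (i : ℕ) : ℝ :=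
  N.choose i * (ascPochhammer ℝ i).eval ν / (ascPochhammer ℝ i).eval (ν + N - i)

theorem symmetrizingWeight_mul_eq {N i : ℕ} (hi : i < N) {ν : ℝ} (hν : 0 < ν) :
    symmetrizingWeight N ν i * ((N - i) * (ν + i))
      = (i + 1) * (ν + N - (i + 1)) * symmetrizingWeight N ν (i + 1) := by
  have hiN : (i : ℝ) + 1 ≤ N := by exact_mod_cast hi
  have hpos : 0 < ν + N - (i + 1) := by linarith
  have hden : 0 < (ascPochhammer ℝ i).eval (ν + N - i) := ascPochhammer_pos i _ (by linarith)
  have hchoose : (N.choose (i + 1) : ℝ) * (i + 1) = N.choose i * (N - i) := by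
    have := congrArg (Nat.cast : ℕ → ℝ) (Nat.choose_succ_right_eq N i)
    push_cast [Nat.cast_sub hi.le] at this
    exact this
  have hden_succ : (ascPochhammer ℝ (i + 1)).eval (ν + N - (i + 1))
      = (ν + N - (i + 1)) * (ascPochhammer ℝ i).eval (ν + N - i) := by
    rw [ascPochhammer_succ_eval_left]
    ring_nf
  unfold symmetrizingWeight
  push_cast
  rw [ascPochhammer_succ_eval, hden_succ]
  field_simp
  linear_combination -(ascPochhammer ℝ i).eval ν * hchoose

/-- the diagonal matrix `T^{(ν)}` with entries
`C(N,i)(ν)_i/(ν+N−i)_i` satisfies `T^{(ν)} (F^{(ν)}(y))ᵀ = F^{(ν)}(y) T^{(ν)}`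
for the deformed matrix `F^{(ν)}` of the `(SU(2)×SU(2), diag SU(2))` example. -/
theorem stmt11 (N : ℕ) (ν : ℝ) (hν : 0 < ν)
    (ℓ : ℝ) (hℓ : ℓ = (N : ℝ) / 2)
    (S : Matrix (Fin (N + 1)) (Fin (N + 1)) ℝ)
    (hS : S = Matrix.of fun (i j : Fin (N + 1)) =>
      if (j : ℕ) + 1 = (i : ℕ) then (i : ℝ) / 2
      else if (i : ℕ) + 1 = (j : ℕ) then ((N : ℝ) - (i : ℕ)) / 2
      else 0)
    (F : ℝ → Matrix (Fin (N + 1)) (Fin (N + 1)) ℝ)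
    (hF : ∀ y : ℝ, F y = Matrix.of fun (i j : Fin (N + 1)) =>
      if i = j then
        ℓ * (ℓ + 2) - ((i : ℕ) : ℝ) ^ 2 + 2 * ℓ * ((i : ℕ) : ℝ)
          - (ℓ * (2 * ((i : ℕ) : ℝ) + 1) - ((i : ℕ) : ℝ) ^ 2) / (2 * y * (1 - y))
      else if (j : ℕ) + 1 = (i : ℕ) then
        ((i : ℕ) : ℝ) * (2 * ℓ - ((i : ℕ) : ℝ) + 1) * (1 - 2 * y) / (4 * y * (1 - y))
      else if (i : ℕ) + 1 = (j : ℕ) then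
        (((i : ℕ) : ℝ) + 1) * (2 * ℓ - ((i : ℕ) : ℝ)) * (1 - 2 * y) / (4 * y * (1 - y))
      else 0)
    (Fν : ℝ → Matrix (Fin (N + 1)) (Fin (N + 1)) ℝ)
    (hFν : ∀ y : ℝ, Fν y = F y
      - ((ν - 1) * (2 * ℓ + ν + 1)) • (1 : Matrix (Fin (N + 1)) (Fin (N + 1)) ℝ)
      + ((ν - 1) * (1 - 2 * y) / (2 * y * (1 - y))) •
          (Sᵀ - ℓ • (1 : Matrix (Fin (N + 1)) (Fin (N + 1)) ℝ)
            + (2 * ℓ * y) • (1 : Matrix (Fin (N + 1)) (Fin (N + 1)) ℝ)))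
    (T : Matrix (Fin (N + 1)) (Fin (N + 1)) ℝ)
    (hT : T = Matrix.diagonal fun (i : Fin (N + 1)) =>
      (N.choose (i : ℕ) : ℝ) * (ascPochhammer ℝ (i : ℕ)).eval ν
        / (ascPochhammer ℝ (i : ℕ)).eval (ν + (N : ℝ) - ((i : ℕ) : ℝ))) :
    ∀ y ∈ Set.Ioo (0:ℝ) 1, T * (Fν y)ᵀ = Fν y * T := by
  rintro y ⟨hy0, hy1⟩
  have hy1' : 1 - y ≠ 0 := by linarith
  have hoff : ∀ i j, i ≠ j →
      Fν y i j = F y i j + (ν - 1) * (1 - 2 * y) / (2 * y * (1 - y)) * S j i := by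
    intro i j hij
    simp [hFν, one_apply_ne hij]
  have hT' : T = diagonal fun i : Fin (N + 1) => symmetrizingWeight N ν i := hT
  subst hT' hℓ
  refine diagonal_mul_transpose_eq_mul_diagonal_of_tridiagonal _ _ ?_ ?_
  · intro i j hij hup hdown
    rw [hoff i j hij, hF, hS]
    simp [hij, hup, hdown]
  · intro i j hij
    have hi : (i : ℕ) < N := by omega
    have hne : i ≠ j := Fin.ne_of_val_ne (by omega)
    rw [hoff i j hne, hoff j i hne.symm, hF, hS]
    simp only [of_apply, if_neg hne, if_neg hne.symm, if_pos hij, show (j : ℕ) + 1 ≠ i by omega,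
      if_false]
    rw [← hij]
    push_cast
    field_simp
    linear_combination 4 * (1 - 2 * y) * symmetrizingWeight_mul_eq hi hν
end
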